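/- Let (𝔤, J, ⟨·,·⟩) be a Hermitian Lie algebra such that J is bi-invariant, i.e. [Jx, y] = J[x,y] for all x, y ∈ 𝔤 (so 𝔤 is a complex Lie algebra). Then the metric is Chern flat: Rᶜ(x,y)z = 0 for all x, y, z ∈ 𤤠𝔤. (The paper's claim that complex Lie algebras, with any compatible metric, are Chern flat.) -/

import Mathlib

namespace LieHerm

variable {g : Type*} [LieRing g] [LieAlgebra ℝ g]

/-- `ip` is an inner product: a symmetric positive-definite bilinear form. -/
def IsInnerProduct (ip : g →ₗ[ℝ] g →ₗ[ℝ] ℝ) : Prop :=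
  (∀ x y : g, ip x y = ip y x) ∧ (∀ x : g, x ≠ 0 → 0 < ip x x)

/-- `ip` is compatible with (Hermitian with respect to) `J`. -/
def IsCompatible (ip : g →ₗ[ℝ] g →ₗ[ℝ] ℝ) (J : g →ₗ[ℝ] g) : Prop :=
  ∀ x y : g, ip (J x) (J y) = ip x y

/-- `J` is an integrable complex structure on the Lie algebra `g`. -/
def IsComplexStructure (J : g →ₗ[ℝ] g) : Prop :=
  (∀ x : g, J (J x) = -x) ∧
  (∀ x y : g, ⁅x, y⁆ - ⁅J x, J y⁆ + J ⁅J x, y⁆ + J ⁅x, J y⁆ = 0)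

/-- The Kähler form `ω(x,y) = ⟨Jx, y⟩`. -/
def omega2 (ip : g →ₗ[ℝ] g →ₗ[ℝ] ℝ) (J : g →ₗ[ℝ] g) (x y : g) : ℝ :=
  ip (J x) y

/-- The Chevalley–Eilenberg differential of the Kähler form. -/
def dOmega (ip : g →ₗ[ℝ] g →ₗ[ℝ] ℝ) (J : g →ₗ[ℝ] g) (x y z : g) : ℝ :=
  -(omega2 ip J ⁅x, y⁆ z) + omega2 ip J ⁅x, z⁆ y - omega2 ip J ⁅y, z⁆ x

/-- The Kähler condition `dω = 0`. -/
def IsKaehler (ip : g →ₗ[ℝ] g →ₗ[ℝ] ℝ) (J : g →ₗ[ℝ] g) : Prop :=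
  ∀ x y z : g, dOmega ip J x y z = 0

/-- The 3-form `σ(x,y,z) = dω(Jx,Jy,Jz)`. -/
def sigma3 (ip : g →ₗ[ℝ] g →ₗ[ℝ] ℝ) (J : g →ₗ[ℝ] g) (x y z : g) : ℝ :=
  dOmega ip J (J x) (J y) (J z)

/-- Pluriclosed (SKT): `dσ = 0` where `σ(x,y,z) = dω(Jx,Jy,Jz)`. -/
def IsPluriclosed (ip : g →ₗ[ℝ] g →ₗ[ℝ] ℝ) (J : g →ₗ[ℝ] g) : Prop :=
  ∀ x y z w : g,
    -(sigma3 ip J ⁅x, y⁆ z w) + sigma3 ip J ⁅x, z⁆ y w - sigma3 ip J ⁅x, w⁆ y z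
      - sigma3 ip J ⁅y, z⁆ x w + sigma3 ip J ⁅y, w⁆ x z - sigma3 ip J ⁅z, w⁆ x y = 0

/-- Balanced: the Lee form vanishes, i.e. for every orthonormal basis `(e_i)` one has
`∑ i, dω(e_i, J e_i, x) = 0` for all `x`. -/
def IsBalanced (ip : g →ₗ[ℝ] g →ₗ[ℝ] ℝ) (J : g →ₗ[ℝ] g) : Prop :=
  ∀ (m : ℕ) (b : Module.Basis (Fin m) ℝ g),
    (∀ i j, ip (b i) (b j) = if i = j then 1 else 0) →
    ∀ x : g, ∑ i, dOmega ip J (b i) (J (b i)) x = 0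

/-- The Levi-Civita connection of a metric Lie algebra, via the Koszul formula. -/
def IsLeviCivita (ip : g →ₗ[ℝ] g →ₗ[ℝ] ℝ) (D : g →ₗ[ℝ] g →ₗ[ℝ] g) : Prop :=
  ∀ x y z : g, 2 * ip (D x y) z = ip ⁅x, y⁆ z - ip ⁅y, z⁆ x + ip ⁅z, x⁆ y

/-- The curvature of a connection `D` on a Lie algebra. -/
def curv (D : g →ₗ[ℝ] g →ₗ[ℝ] g) (x y z : g) : g :=
  D x (D y z) - D y (D x z) - D ⁅x, y⁆ z

/-- The torsion of a connection `D` on a Lie algebra. -/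
def tor (D : g →ₗ[ℝ] g →ₗ[ℝ] g) (x y : g) : g :=
  D x y - D y x - ⁅x, y⁆

/-- `D` is the Chern connection: metric, `J`-parallel, torsion has vanishing (1,1)-part. -/
def IsChern (ip : g →ₗ[ℝ] g →ₗ[ℝ] ℝ) (J : g →ₗ[ℝ] g) (D : g →ₗ[ℝ] g →ₗ[ℝ] g) : Prop :=
  (∀ x y z : g, ip (D x y) z + ip y (D x z) = 0) ∧
  (∀ x y : g, D x (J y) = J (D x y)) ∧
  (∀ x y : g, tor D (J x) (J y) = -(tor D x y))

/-- `D` is the Bismut connection: metric, `J`-parallel, totally skew-symmetric torsion. -/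
def IsBismut (ip : g →ₗ[ℝ] g →ₗ[ℝ] ℝ) (J : g →ₗ[ℝ] g) (D : g →ₗ[ℝ] g →ₗ[ℝ] g) : Prop :=
  (∀ x y z : g, ip (D x y) z + ip y (D x z) = 0) ∧
  (∀ x y : g, D x (J y) = J (D x y)) ∧
  (∀ x y z : g, ip (tor D x y) z = -(ip (tor D x z) y))

/-- Unimodularity: `tr (ad x) = 0` for all `x`. -/
def Unimodular (g : Type*) [LieRing g] [LieAlgebra ℝ g] : Prop :=
  ∀ x : g, LinearMap.trace ℝ g (LieAlgebra.ad ℝ g x) = 0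

/-- The commutator ideal `[g,g]`, as a submodule. -/
def commutatorSubmodule (g : Type*) [LieRing g] [LieAlgebra ℝ g] : Submodule ℝ g :=
  Submodule.span ℝ {z : g | ∃ x y : g, ⁅x, y⁆ = z}

/-- `J` is nilpotent in the sense of Cordero–Fernández–Gray–Ugarte. -/
def CFGUNilpotent (J : g →ₗ[ℝ] g) : Prop :=
  ∃ (k : ℕ) (a : ℕ → Submodule ℝ g),
    a 0 = ⊥ ∧
    (∀ l : ℕ, ∀ x : g, x ∈ a (l + 1) ↔ ∀ y : g, ⁅x, y⁆ ∈ a l ∧ ⁅J x, y⁆ ∈ a l) ∧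
    a k = ⊤

/- A bi-invariant `J` gives `[Jx, Jy] = -[x, y]`, so the (1,1)-condition on the
torsion says that `P(x, y) = ∇_x y + J ∇_{Jx} y` is symmetric. Since `P(Jx, y) = -J P(x, y)` and
`P(x, Jy) = J P(x, y)`, symmetry forces `P = 0`, i.e. `∇_{Jx} = J ∘ ∇_x`. Then `∇_x` and
`J ∘ ∇_x` are both skew-adjoint and `∇_x` commutes with `J`, so `J ∘ ∇_x` is at once self-adjoint
and skew-adjoint. Hence the Chern connection vanishes identically. -/

theorem lie_apply_J_apply_J {J : g →ₗ[ℝ] g} (hJ2 : ∀ x : g, J (J x) = -x)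
    (hbi : ∀ x y : g, ⁅J x, y⁆ = J ⁅x, y⁆) (x y : g) : ⁅J x, J y⁆ = -⁅x, y⁆ := by
  have hright : ⁅x, J y⁆ = J ⁅x, y⁆ := by
    rw [← lie_skew, hbi, ← map_neg, lie_skew]
  rw [hbi, hright, hJ2]

theorem IsCompatible.apply_J_left {ip : g →ₗ[ℝ] g →ₗ[ℝ] ℝ} {J : g →ₗ[ℝ] g}
    (hcomp : IsCompatible ip J) (hJ2 : ∀ x : g, J (J x) = -x) (u v : g) :
    ip (J u) v = -ip u (J v) := by
  simpa [hJ2] using (hcomp (J u) v).symm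

theorem IsInnerProduct.eq_zero_of_forall_apply_eq_zero {ip : g →ₗ[ℝ] g →ₗ[ℝ] ℝ}
    (hip : IsInnerProduct ip) {v : g} (h : ∀ u : g, ip u v = 0) : v = 0 := by
  by_contra hv
  exact (hip.2 v hv).ne' (h v)

theorem apply_J_left_of_tor_J_J {J : g →ₗ[ℝ] g} (hJ2 : ∀ x : g, J (J x) = -x)
    (hJJ : ∀ x y : g, ⁅J x, J y⁆ = -⁅x, y⁆) {D : g →ₗ[ℝ] g →ₗ[ℝ] g}
    (hpar : ∀ x y : g, D x (J y) = J (D x y))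
    (htor : ∀ x y : g, tor D (J x) (J y) = -tor D x y) (x y : g) :
    D (J x) y = J (D x y) := by
  set P : g → g → g := fun x y => D x y + J (D (J x) y) with hP
  have hsymm : ∀ x y, P x y = P y x := by
    intro x y
    have h := htor x y
    simp only [tor, hJJ, hpar] at h
    simp only [hP]
    linear_combination (norm := module) h
  have hleft : ∀ x y, P (J x) y = -J (P x y) := by
    intro x y
    simp only [hP, hJ2, map_neg, LinearMap.neg_apply, map_add]
    abel
  have hright : ∀ x y, P x (J y) = J (P x y) := by
    intro x y
    simp only [hP, hpar, map_add]
  have hJP : J (P x y) = 0 := by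
    have h : J (P x y) = -J (P x y) :=
      calc J (P x y) = P y (J x) := by rw [hsymm, hright]
        _ = -J (P x y) := by rw [← hsymm, hleft]
    linear_combination (norm := module) (2⁻¹ : ℝ) • h
  have hPxy : P x y = 0 := by
    simpa [hJ2] using congrArg J hJP
  have h := congrArg J hPxy
  simp only [hP, map_add, hJ2, map_zero] at h
  linear_combination (norm := module) -h

theorem eq_zero_of_skewAdjoint_of_J_comp_skewAdjoint {ip : g →ₗ[ℝ] g →ₗ[ℝ] ℝ}
    {J : g →ₗ[ℝ] g} (hip : IsInnerProduct ip) (hcomp : IsCompatible ip J)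
    (hJ2 : ∀ x : g, J (J x) = -x) {T : g →ₗ[ℝ] g}
    (hT : ∀ u v : g, ip (T u) v = -ip u (T v))
    (hJT : ∀ u v : g, ip (J (T u)) v = -ip u (J (T v)))
    (hcomm : ∀ u : g, T (J u) = J (T u)) : T = 0 := by
  have hzero : ∀ u v : g, ip u (J (T v)) = 0 := by
    intro u v
    have hself : ip (J (T u)) v = ip u (J (T v)) := by
      rw [hcomp.apply_J_left hJ2, hT, hcomm, neg_neg]
    linarith [hJT u v]
  ext v
  have hJTv := hip.eq_zero_of_forall_apply_eq_zero (hzero · v)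
  simpa [hJ2] using congrArg J hJTv

theorem complex_lie_algebra_is_chern_flat_general
    {g : Type*} [LieRing g] [LieAlgebra ℝ g]
    (ip : g →ₗ[ℝ] g →ₗ[ℝ] ℝ) (J : g →ₗ[ℝ] g)
    (hip : IsInnerProduct ip) (hJ : IsComplexStructure J) (hcomp : IsCompatible ip J)
    (hbi : ∀ x y : g, ⁅J x, y⁆ = J ⁅x, y⁆)
    (Dc : g →ₗ[ℝ] g →ₗ[ℝ] g) (hDc : IsChern ip J Dc) :
    ∀ x y z : g, curv Dc x y z = 0 := by
  obtain ⟨hmet, hpar, htor⟩ := hDc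
  have hJ2 := hJ.1
  have hskew : ∀ x u v : g, ip (Dc x u) v = -ip u (Dc x v) := fun x u v =>
    eq_neg_of_add_eq_zero_left (hmet x u v)
  have hleft := apply_J_left_of_tor_J_J hJ2 (lie_apply_J_apply_J hJ2 hbi) hpar htor
  have hDc0 : ∀ x : g, Dc x = 0 := fun x =>
    eq_zero_of_skewAdjoint_of_J_comp_skewAdjoint hip hcomp hJ2 (hskew x)
      (fun u v => by simpa only [← hleft] using hskew (J x) u v) (hpar x)
  intro x y z
  simp [curv, hDc0]

theorem complex_lie_algebra_is_chern_flat
    {g : Type*} [LieRing g] [LieAlgebra ℝ g] [FiniteDimensional ℝ g]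
    (ip : g →ₗ[ℝ] g →ₗ[ℝ] ℝ) (J : g →ₗ[ℝ] g)
    (hip : IsInnerProduct ip) (hJ : IsComplexStructure J) (hcomp : IsCompatible ip J)
    (hbi : ∀ x y : g, ⁅J x, y⁆ = J ⁅x, y⁆)
    (Dc : g →ₗ[ℝ] g →ₗ[ℝ] g) (hDc : IsChern ip J Dc) :
    ∀ x y z : g, curv Dc x y z = 0 :=
  complex_lie_algebra_is_chern_flat_general ip J hip hJ hcomp hbi Dc hDc

end LieHerm
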